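/- arXiv:2207.01675 — 4 statements merged into one kernel-verified Lean document; each statement's English description precedes it below -/
import Mathlib

section
/- Let N ≥ 1, let y be an indeterminate, and define e_j = C(N,j) for j ≠ N, N+1, e_N = 1 + (-1)^{N-1} q, and e_{N+1} = (-1)^N q y, viewed as polynomials in q over ℚ(y). For integers 0 ≤ k ≤ d, let λ_k be the partition (d,...,d,k) with N copies of d, and let s_{λ_k} denote the Schur polynomial expressed via the Jacobi–Trudi formula as the d×d determinant det(e_{λ'_i - i + j}) where λ'_k = ((N+1)^k, N^{d-k}) is the conjugate partition. Then the coefficient of q^d in s_{λ_k} equals (-1)^{d(N-1)} (-y)^k. -/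
/- STATEMENT 0: Jacobi–Trudi determinant in the elementary symmetric functions
`e_j = C(N,j)` for `j ≠ N, N+1`, `e_N = 1 + (-1)^(N-1) q`, `e_{N+1} = (-1)^N q y`,
viewed as polynomials in `q` over `ℚ(y)`.  For `0 ≤ k ≤ d` and the partition
`λ_k = (d^N, k)` with conjugate `λ'_k = ((N+1)^k, N^(d-k))`, the coefficient of
`q^d` in `s_{λ_k} = det (e_{λ'_i - i + j})_{1≤i,j≤d}` equals `(-1)^(d(N-1)) (-y)^k`. -/

open Polynomial

/-- The elementary symmetric functions, as polynomials in `q` over `ℚ(y)`. -/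
noncomputable def elemE (N : ℕ) (j : ℤ) : Polynomial (RatFunc ℚ) :=
  if j = (N : ℤ) then 1 + Polynomial.C ((-1 : RatFunc ℚ) ^ (N - 1)) * Polynomial.X
  else if j = (N : ℤ) + 1 then
    Polynomial.C ((-1 : RatFunc ℚ) ^ N * RatFunc.X) * Polynomial.X
  else if 0 ≤ j then Polynomial.C ((N.choose j.toNat : ℚ) : RatFunc ℚ) else 0

/-- The conjugate partition `λ'_k = ((N+1)^k, N^(d-k))`, one-indexed. -/
def conjPart (N k : ℕ) (i : ℕ) : ℤ := if i ≤ k then (N : ℤ) + 1 else (N : ℤ)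

open Matrix


lemma elemE_natDegree_le (N : ℕ) (j : ℤ) : (elemE N j).natDegree ≤ 1 := by
  unfold elemE
  split_ifs
  · exact (natDegree_add_le _ _).trans
      (max_le (by simp) ((natDegree_C_mul_le _ _).trans (by simp)))
  · exact (natDegree_C_mul_le _ _).trans (by simp)
  · simp
  · simp

lemma coeff_one_aux (c : RatFunc ℚ) : (1 + Polynomial.C c * Polynomial.X).coeff 1 = c := by
  rw [coeff_add, coeff_C_mul, coeff_X_one, coeff_one]
  simp

lemma coeff_one_aux' (c : RatFunc ℚ) : (Polynomial.C c * Polynomial.X).coeff 1 = c := by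
  rw [coeff_C_mul, coeff_X_one, mul_one]

lemma elemE_coeff_one (N : ℕ) (j : ℤ) : (elemE N j).coeff 1 =
    if j = (N : ℤ) then (-1 : RatFunc ℚ) ^ (N - 1)
    else if j = (N : ℤ) + 1 then (-1 : RatFunc ℚ) ^ N * RatFunc.X else 0 := by
  unfold elemE
  split_ifs
  · exact coeff_one_aux _
  · exact coeff_one_aux' _
  · rw [coeff_C]; simp
  · simp

lemma coeff_det (d : ℕ) (M : Matrix (Fin d) (Fin d) (Polynomial (RatFunc ℚ)))
    (h : ∀ i j, (M i j).natDegree ≤ 1) :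
    M.det.coeff d = (Matrix.of fun i j => (M i j).coeff 1).det := by
  rw [Matrix.det_apply, Matrix.det_apply, Polynomial.finset_sum_coeff]
  refine Finset.sum_congr rfl fun σ _ => ?_
  rw [Polynomial.coeff_smul]
  congr 1
  have h2 := Polynomial.coeff_prod_of_natDegree_le (s := (Finset.univ : Finset (Fin d)))
    (f := fun i => M (σ i) i) (n := 1) (fun p _ => h _ _)
  simpa using h2


lemma prod_ite_lt {R : Type*} [CommMonoid R] (d k : ℕ) (hk : k ≤ d) (a b : R) :
    (∏ i : Fin d, if (i:ℕ) < k then a else b) = a ^ k * b ^ (d - k) := by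
  rw [Fin.prod_univ_eq_prod_range (fun i => if i < k then a else b) d,
    Finset.range_eq_Ico, ← Finset.prod_Ico_consecutive _ (Nat.zero_le k) hk]
  have h1 : (∏ i ∈ Finset.Ico 0 k, if i < k then a else b) = a ^ k := by
    rw [Finset.prod_congr rfl (fun i hi => by
      rw [if_pos (Finset.mem_Ico.mp hi).2]), Finset.prod_const, Nat.card_Ico, Nat.sub_zero]
  have h2 : (∏ i ∈ Finset.Ico k d, if i < k then a else b) = b ^ (d - k) := by
    rw [Finset.prod_congr rfl (fun i hi => by
      rw [if_neg (by have := (Finset.mem_Ico.mp hi).1; omega)]),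
      Finset.prod_const, Nat.card_Ico]
  rw [h1, h2]

lemma det_bidiag {R : Type*} [CommRing R] (d k : ℕ) (hk : k ≤ d) (a b : R) :
    (Matrix.of fun i j : Fin d =>
      if (i:ℕ) < k then (if (j:ℕ) = (i:ℕ) then a else if (j:ℕ)+1 = (i:ℕ) then b else 0)
      else (if (j:ℕ) = (i:ℕ) then b else if (j:ℕ) = (i:ℕ)+1 then a else 0)).det
    = a ^ k * b ^ (d - k) := by
  set L : Matrix (Fin d) (Fin d) R := Matrix.of fun i j =>
    if (i:ℕ) < k then (if (j:ℕ) = (i:ℕ) then a else if (j:ℕ)+1 = (i:ℕ) then b else 0)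
    else (if j = i then 1 else 0) with hL
  set U : Matrix (Fin d) (Fin d) R := Matrix.of fun i j =>
    if (i:ℕ) < k then (if j = i then 1 else 0)
    else (if (j:ℕ) = (i:ℕ) then b else if (j:ℕ) = (i:ℕ)+1 then a else 0) with hU
  have hLU : (Matrix.of fun i j : Fin d =>
      if (i:ℕ) < k then (if (j:ℕ) = (i:ℕ) then a else if (j:ℕ)+1 = (i:ℕ) then b else 0)
      else (if (j:ℕ) = (i:ℕ) then b else if (j:ℕ) = (i:ℕ)+1 then a else 0)) = L * U := by
    ext i j
    rw [Matrix.mul_apply]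
    by_cases hi : (i:ℕ) < k
    · have hz : ∀ m : Fin d, m ∈ Finset.univ → m ≠ j → L i m * U m j = 0 := by
        intro m _ hm
        by_cases hmk : (m:ℕ) < k
        · simp [hL, hU, hmk, hm.symm]
        · have h1 : ¬ ((m:ℕ) = (i:ℕ)) := by omega
          have h2 : ¬ ((m:ℕ)+1 = (i:ℕ)) := by omega
          simp [hL, hU, hi, h1, h2]
      rw [Finset.sum_eq_single_of_mem j (Finset.mem_univ j) hz]
      by_cases hjk : (j:ℕ) < k
      · simp [hL, hU, hi, hjk]
      · have h1 : ¬ ((j:ℕ) = (i:ℕ)) := by omega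
        have h2 : ¬ ((j:ℕ)+1 = (i:ℕ)) := by omega
        simp [hL, hU, hi, hjk, h1, h2]
    · have hz : ∀ m : Fin d, m ∈ Finset.univ → m ≠ i → L i m * U m j = 0 := by
        intro m _ hm
        simp [hL, hi, hm]
      rw [Finset.sum_eq_single_of_mem i (Finset.mem_univ i) hz]
      simp [hL, hU, hi]
  rw [hLU, Matrix.det_mul]
  have hdetL : L.det = a ^ k := by
    rw [Matrix.det_of_lowerTriangular]
    · have he : ∀ i : Fin d, i ∈ Finset.univ → L i i = if (i:ℕ) < k then a else 1 := by
        intro i _; by_cases hi : (i:ℕ) < k <;> simp [hL, hi]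
      rw [Finset.prod_congr rfl he, prod_ite_lt d k hk a 1, one_pow, mul_one]
    · intro i j hij
      have h0 : (i:ℕ) < (j:ℕ) := hij
      have h1 : ¬ ((j:ℕ) = (i:ℕ)) := by omega
      have h2 : ¬ ((j:ℕ)+1 = (i:ℕ)) := by omega
      by_cases hi : (i:ℕ) < k <;> simp [hL, hi, h1, h2, Fin.ext_iff]
  have hdetU : U.det = b ^ (d - k) := by
    rw [Matrix.det_of_upperTriangular]
    · have he : ∀ i : Fin d, i ∈ Finset.univ → U i i = if (i:ℕ) < k then 1 else b := by
        intro i _; by_cases hi : (i:ℕ) < k <;> simp [hU, hi]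
      rw [Finset.prod_congr rfl he, prod_ite_lt d k hk 1 b, one_pow, one_mul]
    · intro i j hij
      have h0 : (j:ℕ) < (i:ℕ) := hij
      have h1 : ¬ ((j:ℕ) = (i:ℕ)) := by omega
      have h2 : ¬ ((j:ℕ) = (i:ℕ)+1) := by omega
      by_cases hi : (i:ℕ) < k <;> simp [hU, hi, h1, h2, Fin.ext_iff]
  rw [hdetL, hdetU]

theorem coeff_qd_jacobiTrudi_schur (N d k : ℕ) (hN : 1 ≤ N) (hk : k ≤ d) :
    (Matrix.det (Matrix.of fun i j : Fin d =>
        elemE N (conjPart N k ((i : ℕ) + 1) - ((i : ℕ) + 1) + ((j : ℕ) + 1)))).coeff d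
      = (-1) ^ (d * (N - 1)) * (-(RatFunc.X : RatFunc ℚ)) ^ k := by
  rw [coeff_det d (Matrix.of fun i j : Fin d =>
    elemE N (conjPart N k ((i:ℕ)+1) - ((i:ℕ)+1) + ((j:ℕ)+1))) (fun i j => elemE_natDegree_le _ _)]
  have step2 : (Matrix.of fun i j : Fin d =>
      ((Matrix.of fun i j : Fin d =>
        elemE N (conjPart N k ((i:ℕ)+1) - ((i:ℕ)+1) + ((j:ℕ)+1))) i j).coeff 1)
      = Matrix.of fun i j : Fin d =>
        if (i:ℕ) < k then
          (if (j:ℕ) = (i:ℕ) then ((-1:RatFunc ℚ)^N * RatFunc.X)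
           else if (j:ℕ)+1 = (i:ℕ) then (-1:RatFunc ℚ)^(N-1) else 0)
        else
          (if (j:ℕ) = (i:ℕ) then (-1:RatFunc ℚ)^(N-1)
           else if (j:ℕ) = (i:ℕ)+1 then ((-1:RatFunc ℚ)^N * RatFunc.X) else 0) := by
    ext i j
    simp only [Matrix.of_apply]
    rw [elemE_coeff_one]
    unfold conjPart
    by_cases hi : (i:ℕ) < k
    · rw [if_pos (by omega : (i:ℕ)+1 ≤ k), if_pos hi]
      by_cases hji : (j:ℕ) = (i:ℕ)
      · rw [if_pos hji, if_neg (by omega), if_pos (by omega)]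
      · rw [if_neg hji]
        by_cases hji1 : (j:ℕ)+1 = (i:ℕ)
        · rw [if_pos hji1, if_pos (by omega)]
        · rw [if_neg hji1, if_neg (by omega), if_neg (by omega)]
    · rw [if_neg (by omega : ¬ (i:ℕ)+1 ≤ k), if_neg hi]
      by_cases hji : (j:ℕ) = (i:ℕ)
      · rw [if_pos hji, if_pos (by omega)]
      · rw [if_neg hji]
        by_cases hji1 : (j:ℕ) = (i:ℕ)+1
        · rw [if_pos hji1, if_neg (by omega), if_pos (by omega)]
        · rw [if_neg hji1, if_neg (by omega), if_neg (by omega)]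
  rw [step2, det_bidiag d k hk]
  obtain ⟨m, rfl⟩ : ∃ m, N = m + 1 := ⟨N - 1, by omega⟩
  obtain ⟨c, rfl⟩ : ∃ c, d = c + k := ⟨d - k, by omega⟩
  simp only [Nat.add_sub_cancel]
  rw [mul_pow, ← pow_mul, ← pow_mul, neg_pow RatFunc.X]
  ring_nf
end

section
/- Let N ≥ 1, d ≥ 0, and χ be integers with χ ≥ Nd, and let y be an indeterminate. In the field of rational functions ℚ(y), consider the rational differential form ω = t^{(N+1)d - χ} (1-t)^{χ - Nd} (1 - y t)^{-(d+1)} dt. Then 1 + (-1)^{(N-1)d + χ} y^{d+1} · Res_{t=0} ω = Σ_{k=0}^{d} C(-χ + (N+1)d, k) · (-y)^k / (1-y)^{(N+1)d - χ}. -/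
/- STATEMENT 4: For `N ≥ 1`, `d ≥ 0`, `χ ≥ Nd`, and `ω = t^((N+1)d-χ)(1-t)^(χ-Nd)(1-yt)^(-(d+1)) dt`
over `ℚ(y)`:
`1 + (-1)^((N-1)d+χ) y^(d+1) Res_{t=0} ω = Σ_{k=0}^d C(-χ+(N+1)d, k) (-y)^k / (1-y)^((N+1)d-χ)`. -/

open PowerSeries

/-- Generalized binomial coefficient `C(a,k)` in `ℚ(y)`. -/
noncomputable def gchoose (a : ℤ) (k : ℕ) : RatFunc ℚ :=
  (∏ i ∈ Finset.range k, ((a : RatFunc ℚ) - (i : RatFunc ℚ))) / (k.factorial : RatFunc ℚ)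

/-- The power-series part `(1-t)^(χ-Nd) (1-yt)^(-(d+1))` of `ω`. -/
noncomputable def omegaSeries (N d : ℕ) (χ : ℤ) : PowerSeries (RatFunc ℚ) :=
  (1 - PowerSeries.X) ^ (χ - (N : ℤ) * d).toNat *
    ((1 - PowerSeries.C (R := RatFunc ℚ) RatFunc.X * PowerSeries.X) ^ (d + 1))⁻¹

/-- `Res_{t=0} ω`: the coefficient of `t^(-1)` of `t^((N+1)d-χ) ⬝ omegaSeries`. -/
noncomputable def resOmega (N d : ℕ) (χ : ℤ) : RatFunc ℚ :=
  if 0 ≤ χ - ((N : ℤ) + 1) * d - 1 then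
    PowerSeries.coeff (R := RatFunc ℚ) (χ - ((N : ℤ) + 1) * d - 1).toNat (omegaSeries N d χ)
  else 0

/-! Write `χ = N d + m`. If `m ≤ d` the form `ω` has no pole, and the right-hand side is
`(1 - y)^b / (1 - y)^b` with `b = d - m`. If `m = a + d + 1`, the residue is the coefficient of `tᵃ`
in `(1 - t)^(a+d+1) (1 - y t)^(-(d+1))`, which is `(-1)ᵃ T` for the finite alternating sum
`T = residueSum a d y`. Since `C(-(a+1), k) (-y)ᵏ = C(a+k, k) yᵏ`, the identity becomes
`(1 - y)^(a+1) ∑_{k ≤ d} C(a+k, k) yᵏ = 1 - y^(d+1) T`. The left-hand side is `(1 - y)^(a+1)`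
times the degree-`d` truncation of its inverse series, so it is `1` up to `O(y^(d+1))`; the exact
remainder `T` is found by induction on `a` through Pascal's rule. -/

open Finset

section Combinatorics
variable {R : Type*} [CommRing R]

theorem one_sub_pow_eq_sum_choose_mul_neg_pow (y : R) (n : ℕ) :
    (1 - y) ^ n = ∑ k ∈ range (n + 1), (n.choose k : R) * (-y) ^ k := by
  rw [← neg_add_eq_sub, add_pow]
  simp only [one_pow, mul_one, mul_comm]

theorem one_sub_mul_sum_range_add_succ_choose (y : R) (a d : ℕ) :
    (1 - y) * ∑ k ∈ range (d + 1), ((a + 1 + k).choose k : R) * y ^ k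
      = ∑ k ∈ range (d + 1), ((a + k).choose k : R) * y ^ k
        - ((a + d + 1).choose d : R) * y ^ (d + 1) := by
  induction d with
  | zero => simp
  | succ d ih =>
    rw [sum_range_succ, sum_range_succ (fun k => ((a + k).choose k : R) * y ^ k), mul_add, ih,
      show a + 1 + (d + 1) = a + d + 1 + 1 by omega, show a + (d + 1) = a + d + 1 by omega,
      Nat.choose_succ_succ' (a + d + 1) d]
    push_cast
    ring

def residueSum (a d : ℕ) (y : R) : R :=
  ∑ k ∈ range (a + 1), (-1) ^ k * ((a + d + 1).choose (d + 1 + k) : R) * (d + k).choose d * y ^ k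

theorem residueSum_succ (a d : ℕ) (y : R) :
    residueSum (a + 1) d y = residueSum a d y + ((a + d + 1).choose d : R) * (1 - y) ^ (a + 1) := by
  have pascal : ∀ k ∈ range (a + 2),
      (-1) ^ k * ((a + 1 + d + 1).choose (d + 1 + k) : R) * (d + k).choose d * y ^ k
        = (-1) ^ k * ((a + d + 1).choose (d + 1 + k) : R) * (d + k).choose d * y ^ k
          + ((a + d + 1).choose d : R) * ((a + 1).choose k * (-y) ^ k) := by
    intro k _
    have hmul := Nat.choose_mul (n := a + d + 1) (Nat.le_add_right d k)
    rw [show a + d + 1 - d = a + 1 by omega, Nat.add_sub_cancel_left] at hmul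
    have hmulR : ((a + d + 1).choose (d + k) : R) * (d + k).choose d
        = ((a + d + 1).choose d : R) * (a + 1).choose k := by
      rw [← Nat.cast_mul, hmul, Nat.cast_mul]
    rw [show a + 1 + d + 1 = (a + d + 1) + 1 by omega, show d + 1 + k = (d + k) + 1 by omega,
      Nat.choose_succ_succ', neg_pow]
    push_cast
    linear_combination (-1) ^ k * y ^ k * hmulR
  rw [residueSum, sum_congr rfl pascal, sum_add_distrib, ← mul_sum,
    ← one_sub_pow_eq_sum_choose_mul_neg_pow, sum_range_succ,
    Nat.choose_eq_zero_of_lt (by omega : a + d + 1 < d + 1 + (a + 1))]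
  simp [residueSum]

theorem one_sub_pow_mul_sum_range_choose (y : R) (a d : ℕ) :
    (1 - y) ^ (a + 1) * ∑ k ∈ range (d + 1), ((a + k).choose k : R) * y ^ k
      = 1 - y ^ (d + 1) * residueSum a d y := by
  induction a with
  | zero => simp [residueSum, mul_neg_geom_sum]
  | succ a ih =>
    rw [pow_succ', mul_assoc, mul_left_comm, one_sub_mul_sum_range_add_succ_choose,
      residueSum_succ]
    linear_combination ih

end Combinatorics

theorem coeff_one_sub_X_pow {R : Type*} [CommRing R] (m i : ℕ) :
    coeff i ((1 - X : R⟦X⟧) ^ m) = (-1) ^ i * m.choose i := by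
  have : (1 - X : R⟦X⟧) = rescale (-1) (1 + X) := by simp [sub_eq_add_neg]
  rw [this, ← map_pow, coeff_rescale, ← Polynomial.coe_X, ← Polynomial.coe_one,
    ← Polynomial.coe_add, ← Polynomial.coe_pow, Polynomial.coeff_coe,
    Polynomial.coeff_one_add_X_pow]

section Field
variable {K : Type*} [Field K]

theorem inv_one_sub_C_mul_X_pow (y : K) (d : ℕ) :
    ((1 - C y * X : K⟦X⟧) ^ (d + 1))⁻¹ = rescale y (mk fun n => ((d + n).choose d : K)) := by
  rw [PowerSeries.inv_eq_iff_mul_eq_one (by simp)]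
  have : (1 - C y * X : K⟦X⟧) = rescale y (1 - X) := by simp
  rw [this, ← map_pow, ← map_mul, mk_add_choose_mul_one_sub_pow_eq_one, map_one]

theorem coeff_one_sub_X_pow_mul_inv_one_sub_C_mul_X_pow (y : K) (a d : ℕ) :
    coeff a ((1 - X : K⟦X⟧) ^ (a + d + 1) * ((1 - C y * X) ^ (d + 1))⁻¹)
      = (-1) ^ a * residueSum a d y := by
  rw [inv_one_sub_C_mul_X_pow, mul_comm, coeff_mul, residueSum,
    Nat.sum_antidiagonal_eq_sum_range_succ (fun i j => coeff i (rescale y _) * coeff j _), mul_sum]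
  refine sum_congr rfl fun k hk => ?_
  obtain ⟨j, rfl⟩ := Nat.exists_eq_add_of_le (mem_range_succ_iff.mp hk)
  have hsign : (-1 : K) ^ (k + j) * (-1) ^ k = (-1) ^ j := by
    rw [pow_add, mul_right_comm, ← mul_pow, neg_one_mul, neg_neg, one_pow, one_mul]
  rw [coeff_rescale, coeff_mk, coeff_one_sub_X_pow, Nat.add_sub_cancel_left,
    Nat.choose_symm_of_eq_add (by omega : k + j + d + 1 = j + (d + 1 + k))]
  linear_combination
    (-(((k + j + d + 1).choose (d + 1 + k) : K) * (d + k).choose d * y ^ k)) * hsign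

theorem RatFunc.one_sub_X_ne_zero : (1 - RatFunc.X : RatFunc K) ≠ 0 := by
  rw [sub_ne_zero]
  intro h
  simpa using congrArg RatFunc.intDegree h

end Field

theorem resOmega_of_le {N d : ℕ} {χ : ℤ} (h : χ ≤ ((N : ℤ) + 1) * d) : resOmega N d χ = 0 :=
  if_neg (by omega)

theorem resOmega_of_eq {N d a : ℕ} {χ : ℤ} (h : χ = ((N : ℤ) + 1) * d + a + 1) :
    resOmega N d χ = (-1) ^ a * residueSum a d RatFunc.X := by
  have hNd : ((N : ℤ) + 1) * d = N * d + d := by ring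
  rw [resOmega, if_pos (by omega), show (χ - ((N : ℤ) + 1) * d - 1).toNat = a by omega,
    omegaSeries, show (χ - N * d).toNat = a + d + 1 by omega,
    coeff_one_sub_X_pow_mul_inv_one_sub_C_mul_X_pow]

theorem gchoose_natCast (b k : ℕ) : gchoose b k = b.choose k := by
  have hprod : ∏ i ∈ range k, (((b : ℤ) : RatFunc ℚ) - i) = b.descFactorial k := by
    induction k with
    | zero => simp
    | succ k ih =>
      rw [prod_range_succ, ih, Nat.descFactorial_succ]
      rcases le_or_gt k b with hkb | hbk
      · push_cast [hkb]; ring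
      · simp [Nat.descFactorial_eq_zero_iff_lt.mpr hbk]
  have hk : (k.factorial : RatFunc ℚ) ≠ 0 := Nat.cast_ne_zero.mpr k.factorial_ne_zero
  rw [gchoose, hprod, Nat.descFactorial_eq_factorial_mul_choose]
  push_cast
  field_simp

theorem gchoose_neg_natCast_sub_one (a k : ℕ) :
    gchoose (-a - 1) k = (-1) ^ k * (a + k).choose k := by
  have hprod : ∏ i ∈ range k, (((-a - 1 : ℤ) : RatFunc ℚ) - i)
      = (-1) ^ k * (a + 1).ascFactorial k := by
    induction k with
    | zero => simp
    | succ k ih =>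
      rw [prod_range_succ, ih, Nat.ascFactorial_succ]
      push_cast
      ring
  have hk : (k.factorial : RatFunc ℚ) ≠ 0 := Nat.cast_ne_zero.mpr k.factorial_ne_zero
  rw [gchoose, hprod, Nat.ascFactorial_eq_factorial_mul_choose]
  push_cast
  field_simp

theorem sum_gchoose_natCast_mul_neg_pow {b d : ℕ} (h : b ≤ d) (y : RatFunc ℚ) :
    ∑ k ∈ range (d + 1), gchoose b k * (-y) ^ k = (1 - y) ^ b := by
  rw [one_sub_pow_eq_sum_choose_mul_neg_pow]
  simp only [gchoose_natCast]
  refine (sum_subset (range_subset_range.mpr (by omega)) fun k _ hk => ?_).symm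
  rw [Nat.choose_eq_zero_of_lt (by simpa using hk), Nat.cast_zero, zero_mul]

theorem sum_gchoose_neg_natCast_sub_one_mul_neg_pow (a d : ℕ) (y : RatFunc ℚ) :
    ∑ k ∈ range (d + 1), gchoose (-a - 1) k * (-y) ^ k
      = ∑ k ∈ range (d + 1), ((a + k).choose k : RatFunc ℚ) * y ^ k := by
  refine sum_congr rfl fun k _ => ?_
  rw [gchoose_neg_natCast_sub_one, mul_right_comm, ← mul_pow, neg_one_mul, neg_neg, mul_comm]

theorem residue_identity (N d : ℕ) (χ : ℤ) (hN : 1 ≤ N) (hχ : (N : ℤ) * d ≤ χ) :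
    1 + (-1 : RatFunc ℚ) ^ ((N - 1) * d + χ.toNat) * RatFunc.X ^ (d + 1) * resOmega N d χ
      = ∑ k ∈ Finset.range (d + 1),
          gchoose (-χ + ((N : ℤ) + 1) * d) k * (-(RatFunc.X : RatFunc ℚ)) ^ k /
            ((1 - RatFunc.X : RatFunc ℚ) ^ (((N : ℤ) + 1) * d - χ)) := by
  have hNd : ((N : ℤ) + 1) * d = N * d + d := by ring
  obtain ⟨m, rfl⟩ : ∃ m : ℕ, χ = N * d + m := ⟨(χ - N * d).toNat, by omega⟩
  rw [← sum_div]
  rcases le_or_gt m d with hmd | hdm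
  · obtain ⟨b, hb⟩ := Nat.exists_eq_add_of_le hmd
    rw [resOmega_of_le (by omega), show -(N * d + m : ℤ) + (N + 1) * d = b by omega,
      show ((N : ℤ) + 1) * d - (N * d + m) = b by omega, zpow_natCast,
      sum_gchoose_natCast_mul_neg_pow (by omega),
      div_self (pow_ne_zero _ RatFunc.one_sub_X_ne_zero), mul_zero, add_zero]
  · obtain ⟨a, ha⟩ : ∃ a, m = a + d + 1 := ⟨m - d - 1, by omega⟩
    have hsign : (-1 : RatFunc ℚ) ^ ((N - 1) * d + (N * d + m : ℤ).toNat) * (-1) ^ a = -1 := by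
      have hpred : (N - 1) * d + d = N * d := by
        rw [Nat.sub_one_mul, Nat.sub_add_cancel (Nat.le_mul_of_pos_left d hN)]
      rw [← pow_add, Odd.neg_one_pow]
      exact ⟨N * d + a, by omega⟩
    rw [resOmega_of_eq (a := a) (by omega), show -(N * d + m : ℤ) + (N + 1) * d = -a - 1 by omega,
      show ((N : ℤ) + 1) * d - (N * d + m) = -((a + 1 : ℕ) : ℤ) by omega, zpow_neg, zpow_natCast,
      div_inv_eq_mul, sum_gchoose_neg_natCast_sub_one_mul_neg_pow,
      mul_comm _ ((1 - RatFunc.X) ^ (a + 1)), one_sub_pow_mul_sum_range_choose,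
      mul_mul_mul_comm, hsign, neg_one_mul, ← sub_eq_add_neg]
end

section
/- Let N ≥ 1. There is a unique formal power series f(z) ∈ ℚ[[z]] with f(0) = 1 satisfying f(z)^N - f(z)^{N+1} + z = 0, and it satisfies f(-z)^N = 1 - Σ_{d≥1} (N/d) C((N+1)(d-1), d-1) z^d. -/
/-!
Existence and uniqueness are Hensel's lemma in the `X`-adically complete ring `R⟦X⟧`: modulo `X`,
`1` is a simple root of `T^(N+1) - T^N - X`.

For the value, `w = 1 - f(-z)` satisfies `(1 - w)^N w = z`, so `ψ = (1 - w)^N = z / w`. Lagrange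
inversion in residue form, `[z^e] A(w) ψ^(e+1) w' = [t^e] A(t)`, applied to
`A = (1 - t)^(-(N e + 1))` gives
`(e + 1) [z^(e+1)] ψ = [z^e] ψ' = -N [z^e] A(w) ψ^(e+1) w' = -N C((N+1)e, e)`.
-/

/-- `G(z) = Σ_{d≥1} (N/d) C((N+1)(d-1), d-1) z^d`, the Fuss–Catalan generating series. -/
noncomputable def Gs (N : ℕ) : PowerSeries ℚ :=
  PowerSeries.mk fun d =>
    if d = 0 then 0 else (N : ℚ) / (d : ℚ) * (((N + 1) * (d - 1)).choose (d - 1) : ℚ)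

open PowerSeries Finset

theorem Polynomial.eq_of_isRoot_of_sub_mem {R : Type*} [CommRing R] {I : Ideal R}
    (hI : I ≤ Ideal.jacobson ⊥) {f : Polynomial R} {a b a₀ : R} (ha : f.IsRoot a)
    (hb : f.IsRoot b) (ha₀ : a - a₀ ∈ I) (hb₀ : b - a₀ ∈ I)
    (hunit : IsUnit (f.derivative.eval a₀)) : a = b := by
  have := isLocalHom_of_le_jacobson_bot I hI
  obtain ⟨k, hk⟩ := Polynomial.binomExpansion f a (b - a)
  rw [add_sub_cancel, hb.eq_zero, ha.eq_zero] at hk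
  set u := f.derivative.eval a + k * (b - a)
  have hu : u - f.derivative.eval a₀ ∈ I := by
    have h₁ := I.mem_of_dvd (Polynomial.sub_dvd_eval_sub a a₀ f.derivative) ha₀
    have h₂ : k * (b - a) ∈ I := I.mul_mem_left k (by simpa using I.sub_mem hb₀ ha₀)
    convert I.add_mem h₁ h₂ using 1
    ring
  have hu_unit : IsUnit u :=
    IsUnit.of_map (Ideal.Quotient.mk I) u (Ideal.Quotient.eq.mpr hu ▸ hunit.map _)
  have : (b - a) * u = 0 := by linear_combination -hk
  exact (sub_eq_zero.mp (hu_unit.mul_left_eq_zero.mp this)).symm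

theorem HenselianRing.existsUnique_isRoot {R : Type*} [CommRing R] {I : Ideal R}
    [HenselianRing R I] {f : Polynomial R} (hf : f.Monic) {a₀ : R} (h₁ : f.eval a₀ ∈ I)
    (h₂ : IsUnit (f.derivative.eval a₀)) : ∃! a, f.IsRoot a ∧ a - a₀ ∈ I := by
  obtain ⟨a, ha, ha₀⟩ := HenselianRing.is_henselian f hf a₀ h₁ (h₂.map _)
  exact ⟨a, ⟨ha, ha₀⟩, fun b ⟨hb, hb₀⟩ =>
    (Polynomial.eq_of_isRoot_of_sub_mem HenselianRing.jac ha hb ha₀ hb₀ h₂).symm⟩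

theorem PowerSeries.existsUnique_pow_sub_pow_succ_add_X_eq_zero (R : Type*) [CommRing R]
    (N : ℕ) : ∃! f : R⟦X⟧, constantCoeff f = 1 ∧ f ^ N - f ^ (N + 1) + X = 0 := by
  set p : Polynomial R⟦X⟧ :=
    Polynomial.X ^ (N + 1) - (Polynomial.X ^ N + Polynomial.C X)
  have hp : p.Monic := Polynomial.monic_X_pow_sub <| by
    compute_degree!
    exact WithBot.coe_lt_coe.mpr N.lt_succ_self
  have h₁ : p.eval 1 ∈ Ideal.span {X} := by simp [p]
  have h₂ : p.derivative.eval 1 = 1 := by simp [p, Polynomial.derivative_X_pow]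
  refine (existsUnique_congr fun f => ?_).mp
    (HenselianRing.existsUnique_isRoot hp h₁ (h₂.symm ▸ isUnit_one))
  rw [Ideal.mem_span_singleton, X_dvd_iff, map_sub, map_one, sub_eq_zero, and_comm]
  refine and_congr_right fun _ => ?_
  simp only [p, Polynomial.IsRoot, Polynomial.eval_sub, Polynomial.eval_add,
    Polynomial.eval_pow, Polynomial.eval_X, Polynomial.eval_C]
  constructor <;> intro h <;> linear_combination -h

theorem PowerSeries.X_mul_derivative_pow {R : Type*} [CommRing R] {ψ w : R⟦X⟧} (hψw : ψ * w = X)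
    (k : ℕ) : X * d⁄dX R (ψ ^ k) = k • ψ ^ k - k • (ψ ^ (k + 1) * d⁄dX R w) := by
  have hd : ψ * d⁄dX R w + w * d⁄dX R ψ = 1 := by
    simpa [smul_eq_mul] using congrArg (d⁄dX R) hψw
  rcases k with _ | k
  · simp
  · rw [Derivation.leibniz_pow, Nat.add_sub_cancel, smul_eq_mul]
    simp only [nsmul_eq_mul]
    push_cast
    linear_combination (-((k + 1 : R⟦X⟧) * ψ ^ k * d⁄dX R ψ)) * hψw
      + ((k + 1 : R⟦X⟧) * ψ ^ (k + 1)) * hd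

section LagrangeInversion

variable {K : Type*} [Field K] [CharZero K] {ψ w : K⟦X⟧}

/-- `ψ^(k+1) w' = X^(k+1) w' / w^(k+1)`, and the residue of `w' / w^(k+1)` is `δ_{k0}`. -/
theorem PowerSeries.coeff_pow_succ_mul_derivative (hψw : ψ * w = X) (hw : constantCoeff w = 0)
    (k : ℕ) : coeff k (ψ ^ (k + 1) * d⁄dX K w) = if k = 0 then 1 else 0 := by
  rcases k with _ | k
  · have hd := congrArg (constantCoeff ∘ d⁄dX K) hψw
    simp only [Function.comp_apply, Derivation.leibniz, derivative_X, smul_eq_mul, map_add,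
      map_mul, hw, zero_mul, add_zero, map_one] at hd
    simpa [hw] using hd
  · have h := congrArg (coeff (k + 1)) (X_mul_derivative_pow hψw (k + 1))
    rw [coeff_succ_X_mul, coeff_derivative, map_sub, map_nsmul, map_nsmul, nsmul_eq_mul,
      nsmul_eq_mul] at h
    have hk : ((k + 1 : ℕ) : K) ≠ 0 := Nat.cast_ne_zero.mpr k.succ_ne_zero
    push_cast at h hk
    have : ((k : K) + 1) * coeff (k + 1) (ψ ^ (k + 1 + 1) * d⁄dX K w) = 0 := by
      linear_combination h
    simpa [hk] using this

theorem PowerSeries.coeff_pow_mul_pow_succ_mul_derivative (hψw : ψ * w = X)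
    (hw : constantCoeff w = 0) {i e : ℕ} (hie : i ≤ e) :
    coeff e (w ^ i * (ψ ^ (e + 1) * d⁄dX K w)) = if i = e then 1 else 0 := by
  obtain ⟨j, rfl⟩ := Nat.exists_eq_add_of_le hie
  have : w ^ i * (ψ ^ (i + j + 1) * d⁄dX K w) = X ^ i * (ψ ^ (j + 1) * d⁄dX K w) := by
    rw [← hψw, mul_pow]
    ring
  rw [this, coeff_X_pow_mul', if_pos (Nat.le_add_right i j), Nat.add_sub_cancel_left,
    coeff_pow_succ_mul_derivative hψw hw]
  simp

/-- Lagrange inversion. -/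
theorem PowerSeries.coeff_subst_mul_pow_succ_mul_derivative (hψw : ψ * w = X)
    (hw : constantCoeff w = 0) (A : K⟦X⟧) (e : ℕ) :
    coeff e (A.subst w * (ψ ^ (e + 1) * d⁄dX K w)) = coeff e A := by
  have hs : HasSubst w := HasSubst.of_constantCoeff_zero' hw
  set G := ψ ^ (e + 1) * d⁄dX K w
  have htail : coeff e ((X ^ (e + 1) * mk fun i ↦ coeff (i + (e + 1)) A).subst w * G) = 0 := by
    rw [← coe_substAlgHom hs, map_mul (substAlgHom hs), map_pow, substAlgHom_X, mul_assoc]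
    refine X_pow_dvd_iff.mp ?_ e e.lt_succ_self
    exact (pow_dvd_pow_of_dvd (X_dvd_iff.mpr hw) _).mul_right _
  have hhead : coeff e ((A.trunc (e + 1) : K⟦X⟧).subst w * G) = coeff e A := by
    rw [subst_coe hs, Polynomial.aeval_def, eval₂_trunc_eq_sum_range, sum_mul, map_sum,
      sum_eq_single_of_mem e (self_mem_range_succ e)]
    · rw [algebraMap_eq, mul_assoc, coeff_C_mul,
        coeff_pow_mul_pow_succ_mul_derivative hψw hw le_rfl, if_pos rfl, mul_one]
    · intro i hi hie
      rw [algebraMap_eq, mul_assoc, coeff_C_mul,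
        coeff_pow_mul_pow_succ_mul_derivative hψw hw (mem_range_succ_iff.mp hi), if_neg hie,
        mul_zero]
  conv_lhs => rw [eq_X_pow_mul_shift_add_trunc (e + 1) A]
  rw [subst_add hs, add_mul, map_add, htail, hhead, zero_add]

theorem PowerSeries.coeff_succ_one_sub_pow_mul {N : ℕ} (hw : (1 - w) ^ N * w = X)
    (hw0 : constantCoeff w = 0) (e : ℕ) :
    coeff (e + 1) ((1 - w) ^ N) * (e + 1) = -((N : K) * ((N + 1) * e).choose e) := by
  have hs : HasSubst w := HasSubst.of_constantCoeff_zero' hw0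
  set Q : K⟦X⟧ := mk fun n ↦ ((N * e + n).choose (N * e) : K)
  have hQ : Q.subst w * (1 - w) ^ (N * e + 1) = 1 := by
    simpa [← coe_substAlgHom hs, substAlgHom_X] using
      congrArg (substAlgHom hs) (mk_add_choose_mul_one_sub_pow_eq_one K (N * e))
  have hder : (1 - w) ^ (N * e + 1) * d⁄dX K ((1 - w) ^ N)
      = -(N : K⟦X⟧) * (((1 - w) ^ N) ^ (e + 1) * d⁄dX K w) := by
    rcases N with _ | N
    · simp
    · rw [Derivation.leibniz_pow, Nat.add_sub_cancel, map_sub, derivative_one, smul_eq_mul,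
        nsmul_eq_mul, ← pow_mul]
      push_cast
      ring
  have hder' : d⁄dX K ((1 - w) ^ N)
      = -(N : K⟦X⟧) * (Q.subst w * (((1 - w) ^ N) ^ (e + 1) * d⁄dX K w)) := by
    calc d⁄dX K ((1 - w) ^ N)
        = Q.subst w * ((1 - w) ^ (N * e + 1) * d⁄dX K ((1 - w) ^ N)) := by
          rw [← mul_assoc, hQ, one_mul]
      _ = _ := by rw [hder]; ring
  have h := congrArg (coeff e) hder'
  rw [coeff_derivative, ← map_natCast C, ← map_neg, coeff_C_mul,
    coeff_subst_mul_pow_succ_mul_derivative hw hw0, coeff_mk] at h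
  rw [h, add_mul, Nat.choose_symm_add, one_mul, add_comm, neg_mul]

theorem one_sub_pow_eq_one_sub_Gs {N : ℕ} {w : ℚ⟦X⟧} (hw : (1 - w) ^ N * w = X)
    (hw0 : constantCoeff w = 0) : (1 - w) ^ N = 1 - Gs N := by
  ext (_ | e)
  · simp [Gs, hw0]
  · have h := coeff_succ_one_sub_pow_mul hw hw0 e
    simp only [Gs, map_sub, coeff_mk, coeff_one, Nat.add_sub_cancel, if_neg e.succ_ne_zero]
    field_simp
    push_cast
    linear_combination h

theorem exists_unique_f_and_value_general (N : ℕ) :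
    (∃! f : PowerSeries ℚ,
        PowerSeries.constantCoeff f = 1 ∧ f ^ N - f ^ (N + 1) + PowerSeries.X = 0) ∧
      ∀ f : PowerSeries ℚ, PowerSeries.constantCoeff f = 1 →
        f ^ N - f ^ (N + 1) + PowerSeries.X = 0 →
          (PowerSeries.rescale (-1) f) ^ N = 1 - Gs N := by
  refine ⟨existsUnique_pow_sub_pow_succ_add_X_eq_zero ℚ N, fun f hf0 hf => ?_⟩
  set g := rescale (-1 : ℚ) f
  have hg0 : constantCoeff g = 1 := by
    rw [← coeff_zero_eq_constantCoeff_apply, coeff_rescale, pow_zero, one_mul,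
      coeff_zero_eq_constantCoeff_apply, hf0]
  have hg : g ^ N * (1 - g) = X := by
    have h := congrArg (rescale (-1 : ℚ)) hf
    rw [map_add, map_sub, map_pow, map_pow, rescale_neg_one_X, map_zero] at h
    linear_combination h
  simpa using one_sub_pow_eq_one_sub_Gs (w := 1 - g) (by simpa using hg) (by simp [hg0])

theorem exists_unique_f_and_value (N : ℕ) (hN : 1 ≤ N) :
    (∃! f : PowerSeries ℚ,
        PowerSeries.constantCoeff f = 1 ∧ f ^ N - f ^ (N + 1) + PowerSeries.X = 0) ∧
      ∀ f : PowerSeries ℚ, PowerSeries.constantCoeff f = 1 →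
        f ^ N - f ^ (N + 1) + PowerSeries.X = 0 →
          (PowerSeries.rescale (-1) f) ^ N = 1 - Gs N :=
  exists_unique_f_and_value_general N
end LagrangeInversion
end

section
/- Let s ≥ 1, ℓ ≥ 0, N ≥ s+1, and let ζ be a primitive (s+1)-st root of unity in ℂ. Set x_i = ζ^{i-1} for 1 ≤ i ≤ s+1 and x_i = 0 for s+2 ≤ i ≤ N. Then for the rectangular partition λ = (((s+1)(ℓ+1))^s), the Schur polynomial satisfies s_λ(x_1, ..., x_N) = 1. -/
/-!
The complete homogeneous polynomials have generating function `∑ h_m t^m = ∏ 1 / (1 - x_i t)`.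
At the given point the nonzero `x_i` are exactly the `(s+1)`-st roots of unity, so
`∏ (1 - x_i t) = 1 - t^(s+1)` and `h_m = 1` if `(s+1) ∣ m`, `h_m = 0` otherwise. For `i, j < s`
the index `(s+1)(ℓ+1) + j - i` is divisible by `s+1` only when `i = j`, so the Jacobi–Trudi
matrix is the identity.
-/

open Finset

namespace MvPolynomial

theorem eval_hsymm {σ R : Type*} [Fintype σ] [DecidableEq σ] [CommSemiring R] (x : σ → R)
    (n : ℕ) : eval x (hsymm σ R n) = ∑ μ : Sym σ n, ((μ : Multiset σ).map x).prod := by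
  simp [hsymm, map_multiset_prod, Multiset.map_map]

end MvPolynomial

theorem Nat.dvd_mul_add_sub_iff_eq {n k i j : ℕ} (hk : 0 < k) (hi : i < n) (hj : j < n) :
    n ∣ n * k + j - i ↔ i = j := by
  rw [← Nat.modEq_iff_dvd' (by nlinarith), Nat.ModEq, Nat.mul_add_mod, Nat.mod_eq_of_lt hi,
    Nat.mod_eq_of_lt hj]

theorem IsPrimitiveRoot.prod_one_sub_pow_mul {R : Type*} [CommRing R] [IsDomain R] {ζ : R}
    {n : ℕ} (hζ : IsPrimitiveRoot ζ n) (hn : 0 < n) (a : R) :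
    ∏ k ∈ range n, (1 - ζ ^ k * a) = 1 - a ^ n := by
  simpa [Polynomial.eval_prod] using
    (congrArg (Polynomial.eval 1) (X_pow_sub_C_eq_prod hζ hn (rfl : a ^ n = _))).symm

namespace PowerSeries

open MvPolynomial (eval hsymm eval_hsymm)

theorem mk_eval_hsymm {σ R : Type*} [Fintype σ] [DecidableEq σ] [CommSemiring R] (x : σ → R) :
    mk (fun n ↦ eval x (hsymm σ R n)) = ∏ i, mk (fun n ↦ x i ^ n) := by
  ext n
  simp only [coeff_mk, coeff_prod, eval_hsymm]
  refine sum_bij' (fun μ _ ↦ Multiset.toFinsupp μ)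
    (fun l hl ↦ (Sym.equivNatSum σ n).symm ⟨l, ?_⟩) ?_ ?_ ?_ ?_ ?_
  · simpa [Finsupp.sum_fintype] using hl
  · intro μ _
    simp only [mem_finsuppAntidiag, subset_univ, and_true]
    rw [← Finsupp.sum_fintype _ (fun _ k ↦ k) fun _ ↦ rfl]
    exact (Multiset.toFinsupp_sum_eq _).trans μ.2
  · simp
  · intro μ _; ext; simp
  · intro l _; ext; simp
  · intro μ _
    rw [prod_multiset_map_count]
    refine prod_subset (subset_univ _) fun i _ hi ↦ ?_
    rw [Multiset.count_eq_zero_of_notMem (by simpa using hi), pow_zero]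

theorem one_sub_C_mul_X_mul_mk_pow {R : Type*} [CommRing R] (a : R) :
    (1 - C a * X) * mk (fun n ↦ a ^ n) = 1 := by
  simpa [rescale_mk, rescale_X, mul_comm] using
    congrArg (rescale a) (mk_one_mul_one_sub_eq_one (S := R))

theorem prod_one_sub_C_mul_X_mul_mk_eval_hsymm {σ R : Type*} [Fintype σ] [DecidableEq σ]
    [CommRing R] (x : σ → R) :
    (∏ i, (1 - C (x i) * X)) * mk (fun n ↦ eval x (hsymm σ R n)) = 1 := by
  rw [mk_eval_hsymm, ← prod_mul_distrib]
  exact prod_eq_one fun i _ ↦ one_sub_C_mul_X_mul_mk_pow (x i)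

theorem prod_one_sub_C_ite_pow_mul_X {R : Type*} [CommRing R] [IsDomain R] {ζ : R} {n N : ℕ}
    (hζ : IsPrimitiveRoot ζ n) (hn : 0 < n) (hN : n ≤ N) :
    ∏ t : Fin N, (1 - C (if (t : ℕ) < n then ζ ^ (t : ℕ) else 0) * X) = 1 - X ^ n := by
  rw [Fin.prod_univ_eq_prod_range (fun k ↦ 1 - C (if k < n then ζ ^ k else 0) * X),
    ← prod_subset (range_subset_range.2 hN)
      fun k _ hk ↦ by simp [(by simpa using hk : ¬k < n)]]
  rw [prod_congr rfl fun k hk ↦ by rw [if_pos (mem_range.1 hk), map_pow]]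
  exact (hζ.map_of_injective C_injective).prod_one_sub_pow_mul hn X

theorem coeff_eq_ite_dvd_of_one_sub_X_pow_mul_eq_one {R : Type*} [CommRing R] {n : ℕ}
    (hn : 0 < n) {F : R⟦X⟧} (hF : (1 - X ^ n) * F = 1) (m : ℕ) :
    coeff m F = if n ∣ m then 1 else 0 := by
  have hrec : F = 1 + X ^ n * F := by linear_combination hF
  induction m using Nat.strong_induction_on with
  | _ m ih =>
    rw [hrec, map_add, coeff_one, coeff_X_pow_mul']
    rcases eq_or_ne m 0 with rfl | hm
    · simp [hn.ne']
    rw [if_neg hm, zero_add]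
    by_cases hnm : n ≤ m
    · simp only [if_pos hnm, ih (m - n) (by omega), Nat.dvd_sub_iff_left hnm dvd_rfl]
    · rw [if_neg hnm, if_neg fun h ↦ hnm (Nat.le_of_dvd (by omega) h)]

end PowerSeries

theorem schur_rectangular_at_roots_of_unity_general (s ℓ N : ℕ) (hN : s + 1 ≤ N)
    (ζ : ℂ) (hζ : IsPrimitiveRoot ζ (s + 1)) :
    Matrix.det (Matrix.of fun i j : Fin s =>
        MvPolynomial.eval (fun t : Fin N => if (t : ℕ) < s + 1 then ζ ^ (t : ℕ) else 0)
          (MvPolynomial.hsymm (Fin N) ℂ ((s + 1) * (ℓ + 1) + (j : ℕ) - (i : ℕ))))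
      = 1 := by
  have hF := PowerSeries.prod_one_sub_C_mul_X_mul_mk_eval_hsymm
    fun t : Fin N ↦ if (t : ℕ) < s + 1 then ζ ^ (t : ℕ) else 0
  rw [PowerSeries.prod_one_sub_C_ite_pow_mul_X hζ s.add_one_pos hN] at hF
  convert Matrix.det_one (n := Fin s)
  ext i j
  rw [Matrix.of_apply,
    ← PowerSeries.coeff_mk _ fun m ↦ MvPolynomial.eval _ (MvPolynomial.hsymm _ ℂ m),
    PowerSeries.coeff_eq_ite_dvd_of_one_sub_X_pow_mul_eq_one s.add_one_pos hF, Matrix.one_apply]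
  simp only [Nat.dvd_mul_add_sub_iff_eq ℓ.add_one_pos (by omega : (i : ℕ) < s + 1)
    (by omega : (j : ℕ) < s + 1), Fin.val_inj]

theorem schur_rectangular_at_roots_of_unity (s ℓ N : ℕ) (hs : 1 ≤ s) (hN : s + 1 ≤ N)
    (ζ : ℂ) (hζ : IsPrimitiveRoot ζ (s + 1)) :
    Matrix.det (Matrix.of fun i j : Fin s =>
        MvPolynomial.eval (fun t : Fin N => if (t : ℕ) < s + 1 then ζ ^ (t : ℕ) else 0)
          (MvPolynomial.hsymm (Fin N) ℂ ((s + 1) * (ℓ + 1) + (j : ℕ) - (i : ℕ))))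
      = 1 :=
  schur_rectangular_at_roots_of_unity_general s ℓ N hN ζ hζ
end
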